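/- Let n ≥ 1 and let G be a subgroup of the hyperoctahedral group H_n. If G surjects onto S_n under the natural block projection π and G contains an element σ whose cycle type is 2 ::ₘ t where every element of the multiset t is odd (i.e., σ has exactly one cycle of length 2 and all its other nontrivial cycles have odd length), then G equals all of H_n. -/

import Mathlib

/-- The fixed-point-free involution `ι : (i, b) ↦ (i, ¬b)` on `Fin n × Bool`. -/
def hyperoctahedralInvolution (n : ℕ) : Equiv.Perm (Fin n × Bool) :=
  Function.Involutive.toPerm (fun x => (x.1, !x.2)) (fun x => by simp)

/-- The hyperoctahedral group `H_n = C₂ ≀ Sₙ`, modelled as the subgroup of the symmetric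
group on `Fin n × Bool` consisting of all permutations commuting with `ι`. -/
def hyperoctahedralGroup (n : ℕ) : Subgroup (Equiv.Perm (Fin n × Bool)) :=
  Subgroup.centralizer {hyperoctahedralInvolution n}

/-!
The power `σ ^ (∏ t)` kills the odd cycles of `σ` and keeps its transposition, so `G` contains a
transposition of `H_n`; such a transposition must swap the two points of a block. Conjugating by
lifts of transpositions of `Sₙ` puts every block swap in `G`, and these generate the kernel of
the block projection. Since `G` surjects onto `Sₙ`, it is all of `H_n`.
-/

open Equiv Equiv.Perm Subgroup

namespace Equiv.Perm

theorem isSwap_pow_prod_of_cycleType_eq_two_cons {α : Type*} [Fintype α] [DecidableEq α]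
    {σ : Perm α} {t : Multiset ℕ} (hct : σ.cycleType = 2 ::ₘ t) (ht : ∀ k ∈ t, Odd k) :
    (σ ^ t.prod).IsSwap := by
  obtain ⟨c, τ, rfl, hdisj, -, hc⟩ := mem_cycleType_iff.mp (hct ▸ Multiset.mem_cons_self 2 t)
  have hswap : c.IsSwap := card_support_eq_two.mp hc
  have hτ : τ.cycleType = t := by
    rwa [hdisj.cycleType_mul, isSwap_iff_cycleType.mp hswap, Multiset.singleton_add,
      Multiset.cons_inj_right] at hct
  have hτ_pow : τ ^ t.prod = 1 := by
    rw [← orderOf_dvd_iff_pow_eq_one, ← lcm_cycleType, Multiset.lcm_dvd, hτ]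
    exact fun k hk => Multiset.dvd_prod hk
  have hodd : Odd t.prod := Multiset.prod_induction Odd t (fun _ _ => Odd.mul) odd_one ht
  have hc_pow : c ^ t.prod = c := by
    rw [← pow_mod_orderOf, hswap.orderOf, Nat.odd_iff.mp hodd, pow_one]
  rwa [hdisj.commute.mul_pow, hc_pow, hτ_pow, mul_one]

end Equiv.Perm

namespace hyperoctahedralGroup

variable {n : ℕ} {σ g h : Perm (Fin n × Bool)}

theorem apply_mk_not (hσ : σ ∈ hyperoctahedralGroup n) (i : Fin n) (b : Bool) :
    σ (i, !b) = ((σ (i, b)).1, !(σ (i, b)).2) :=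
  (DFunLike.congr_fun (mem_centralizer_iff.mp hσ _ rfl) (i, b)).symm

theorem fst_apply (hσ : σ ∈ hyperoctahedralGroup n) (x : Fin n × Bool) :
    (σ x).1 = (σ (x.1, false)).1 := by
  rcases x with ⟨i, _ | _⟩
  · rfl
  · rw [show ((i, true) : Fin n × Bool) = (i, !false) from rfl, apply_mk_not hσ]

theorem fst_eq_of_fst_apply_eq (hσ : σ ∈ hyperoctahedralGroup n) {x y : Fin n × Bool}
    (h : (σ x).1 = (σ y).1) : x.1 = y.1 := by
  by_cases h2 : (σ x).2 = (σ y).2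
  · rw [σ.injective (Prod.ext h h2)]
  · have : σ x = σ (y.1, !y.2) := by
      rw [apply_mk_not hσ]
      exact Prod.ext h (Bool.eq_not_iff.mpr h2)
    rw [σ.injective this]

/-- The block projection `π : H_n → Sₙ`. -/
noncomputable def blockPerm (hσ : σ ∈ hyperoctahedralGroup n) : Perm (Fin n) :=
  Equiv.ofBijective (fun i => (σ (i, false)).1)
    (Finite.injective_iff_bijective.mp fun _ _ h => fst_eq_of_fst_apply_eq hσ h)

theorem fst_inv_mul_apply (hg : g ∈ hyperoctahedralGroup n) (hh : h ∈ hyperoctahedralGroup n)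
    (hgh : ∀ i, (g (i, false)).1 = (h (i, false)).1) (x : Fin n × Bool) :
    ((g⁻¹ * h) x).1 = x.1 := by
  refine fst_eq_of_fst_apply_eq hg ?_
  rw [← mul_apply, mul_inv_cancel_left, fst_apply hh, fst_apply hg x, hgh]

theorem eq_one_of_forall_apply_false (hσ : σ ∈ hyperoctahedralGroup n)
    (h : ∀ i, σ (i, false) = (i, false)) : σ = 1 := by
  ext1 ⟨i, _ | _⟩
  · exact h i
  · rw [show ((i, true) : Fin n × Bool) = (i, !false) from rfl, apply_mk_not hσ, h]
    rfl

def blockSwap (i : Fin n) : Perm (Fin n × Bool) :=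
  swap ((i, false) : Fin n × Bool) (i, true)

theorem swap_mk_not_eq_blockSwap (x : Fin n × Bool) : swap x (x.1, !x.2) = blockSwap x.1 := by
  rcases x with ⟨i, _ | _⟩
  · rfl
  · exact swap_comm _ _

theorem blockSwap_mem (i : Fin n) : blockSwap i ∈ hyperoctahedralGroup n := by
  refine mem_centralizer_iff.mpr fun ι hι => ?_
  rw [Set.mem_singleton_iff.mp hι, blockSwap, mul_swap_eq_swap_mul, swap_comm]
  rfl

theorem blockSwap_mul_self (i : Fin n) : blockSwap i * blockSwap i = 1 :=
  swap_mul_self _ _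

theorem fst_blockSwap_apply (i : Fin n) (x : Fin n × Bool) : (blockSwap i x).1 = x.1 := by
  rcases x with ⟨j, b⟩
  rcases eq_or_ne j i with rfl | hj
  · cases b <;> simp [blockSwap]
  · rw [blockSwap, swap_apply_of_ne_of_ne] <;> simp [hj]

theorem mul_blockSwap_mul_inv (hg : g ∈ hyperoctahedralGroup n) (i : Fin n) :
    g * blockSwap i * g⁻¹ = blockSwap (g (i, false)).1 := by
  rw [blockSwap, ← swap_apply_apply, show ((i, true) : Fin n × Bool) = (i, !false) from rfl,
    apply_mk_not hg, swap_mk_not_eq_blockSwap]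

theorem exists_eq_blockSwap_of_isSwap {c : Perm (Fin n × Bool)}
    (hc : c ∈ hyperoctahedralGroup n) (hswap : c.IsSwap) : ∃ i, c = blockSwap i := by
  obtain ⟨x, y, hxy, rfl⟩ := hswap
  refine ⟨x.1, ?_⟩
  suffices hy : y = (x.1, !x.2) by rw [hy, swap_mk_not_eq_blockSwap]
  by_contra hy
  have hfix : swap x y (x.1, !x.2) = (x.1, !x.2) :=
    swap_apply_of_ne_of_ne (by simp [Prod.ext_iff]) (Ne.symm hy)
  rw [apply_mk_not hc, swap_apply_left] at hfix
  exact hxy (Prod.ext (congrArg Prod.fst hfix).symm (by simpa using (congrArg Prod.snd hfix).symm))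

theorem mem_closure_range_blockSwap {d : Perm (Fin n × Bool)} (hd : d ∈ hyperoctahedralGroup n)
    (hfst : ∀ x, (d x).1 = x.1) : d ∈ closure (Set.range (blockSwap (n := n))) := by
  suffices ∀ s : Finset (Fin n), ∀ d ∈ hyperoctahedralGroup n, (∀ x, (d x).1 = x.1) →
      (∀ i ∉ s, d (i, false) = (i, false)) → d ∈ closure (Set.range (blockSwap (n := n))) from
    this Finset.univ d hd hfst (by simp)
  intro s
  induction s using Finset.induction_on with
  | empty =>
    intro d hd _ hfix
    rw [eq_one_of_forall_apply_false hd fun i => hfix i (Finset.notMem_empty i)]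
    exact one_mem _
  | insert a s ha ih =>
    intro d hd hfst hfix
    have hfix_s : ∀ i ∉ s, i ≠ a → d (i, false) = (i, false) := fun i hi hia =>
      hfix i (by simp [hia, hi])
    by_cases hda : d (a, false) = (a, false)
    · exact ih d hd hfst fun i hi => if hia : i = a then hia ▸ hda else hfix_s i hi hia
    have hda' : d (a, false) = (a, true) :=
      Prod.ext (hfst _) (by simpa [Prod.ext_iff, hfst] using hda)
    have hmem : blockSwap a * d ∈ closure (Set.range blockSwap) := by
      refine ih _ (mul_mem (blockSwap_mem a) hd) (fun x => ?_) fun i hi => ?_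
      · rw [mul_apply, fst_blockSwap_apply, hfst]
      · rcases eq_or_ne i a with rfl | hia
        · rw [mul_apply, hda', blockSwap, swap_apply_right]
        · rw [mul_apply, hfix_s i hi hia, blockSwap, swap_apply_of_ne_of_ne] <;> simp [hia]
    simpa [← mul_assoc, blockSwap_mul_self] using
      mul_mem (Subgroup.subset_closure (Set.mem_range_self a)) hmem

end hyperoctahedralGroup

open hyperoctahedralGroup in
theorem subgroup_eq_hyperoctahedral_of_cycleType_general (n : ℕ)
    (G : Subgroup (Equiv.Perm (Fin n × Bool))) (hG : G ≤ hyperoctahedralGroup n)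
    (hsurj : ∀ p : Equiv.Perm (Fin n), ∃ σ ∈ G, ∀ i : Fin n, (σ (i, false)).1 = p i)
    (σ : Equiv.Perm (Fin n × Bool)) (hσ : σ ∈ G) (t : Multiset ℕ)
    (hct : σ.cycleType = 2 ::ₘ t) (ht : ∀ x ∈ t, Odd x) :
    G = hyperoctahedralGroup n := by
  have hpow : σ ^ t.prod ∈ G := G.pow_mem hσ _
  obtain ⟨i, hi⟩ := exists_eq_blockSwap_of_isSwap (hG hpow)
    (isSwap_pow_prod_of_cycleType_eq_two_cons hct ht)
  have hswaps : ∀ j, blockSwap j ∈ G := fun j => by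
    obtain ⟨g, hgG, hg⟩ := hsurj (swap i j)
    have := G.mul_mem (G.mul_mem hgG (hi ▸ hpow)) (G.inv_mem hgG)
    rwa [mul_blockSwap_mul_inv (hG hgG), hg, swap_apply_left] at this
  refine le_antisymm hG fun h hh => ?_
  obtain ⟨g, hgG, hg⟩ := hsurj (blockPerm hh)
  have hker : g⁻¹ * h ∈ G :=
    (closure_le G).mpr (Set.range_subset_iff.mpr hswaps)
      (mem_closure_range_blockSwap (mul_mem (inv_mem (hG hgG)) hh)
        (fst_inv_mul_apply (hG hgG) hh hg))
  simpa using G.mul_mem hgG hker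

/-- If a subgroup `G` of `H_n` surjects onto `Sₙ` under the natural block projection and
contains an element whose cycle type is `2 ::ₘ t` with every element of `t` odd, then `G`
equals all of `H_n`. -/
theorem subgroup_eq_hyperoctahedral_of_cycleType (n : ℕ) (hn : 1 ≤ n)
    (G : Subgroup (Equiv.Perm (Fin n × Bool))) (hG : G ≤ hyperoctahedralGroup n)
    (hsurj : ∀ p : Equiv.Perm (Fin n), ∃ σ ∈ G, ∀ i : Fin n, (σ (i, false)).1 = p i)
    (σ : Equiv.Perm (Fin n × Bool)) (hσ : σ ∈ G) (t : Multiset ℕ)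
    (hct : σ.cycleType = 2 ::ₘ t) (ht : ∀ x ∈ t, Odd x) :
    G = hyperoctahedralGroup n :=
  subgroup_eq_hyperoctahedral_of_cycleType_general n G hG hsurj σ hσ t hct ht
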